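/- arXiv:2205.07167 — 4 statements merged into one kernel-verified Lean document; each statement's English description precedes it below -/
import Mathlib

section
/- Let A ∈ ℤ_{≥0}^{m×d} be a nonnegative integer matrix, let M' ⊆ ker A ∩ ℤ^d be a Markov basis for A (i.e., G(F_{A,c}, M') is connected for every c ∈ ℤ^m), and let M ⊆ ker A ∩ ℤ^d be a finite set of moves. Suppose that for every m' ∈ M', writing m' = m'₊ − m'₋ with m'₊ and m'₋ the (disjointly supported, nonnegative) positive and negative parts of m', there is a finite sequence of moves from ±M leading from m'₊ to m'₋ in which every intermediate integer vector has all entries ≥ −1. Then for every b ∈ ℤ^m, any two tables in F_{A,b} can be joined by a finite sequence of moves from ±M in which every intermediate integer vector u satisfies Au = b and u ≥ −1 componentwise. -/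
/-!
A Markov move `p ↦ q` with `p - q = x ∈ M'` factors as `p = t + x₊`, `q = t + x₋` with
`t = p ⊓ q ≥ 0`. Translating the given `≥ -1`-path from `x₊` to `x₋` by `t` keeps every entry
`≥ -1`, and since `M ⊆ ker A` it stays in the fiber of `A p = b`. Replacing every step of a
Markov-basis path by such a translated path joins any two tables of `F_{A,b}` inside `F̄_{A,b}`.
-/

/-- `u` lies in the fiber `F_{A,b}`: it is componentwise nonnegative and `A u = b`. -/
def inFiber {m d : ℕ} (A : Matrix (Fin m) (Fin d) ℤ) (b : Fin m → ℤ) (u : Fin d → ℤ) : Prop :=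
  (∀ i, 0 ≤ u i) ∧ A.mulVec u = b

/-- `u` lies in the extended fiber `F̄_{A,b}`: componentwise `≥ -1` and `A u = b`. -/
def inExtFiber {m d : ℕ} (A : Matrix (Fin m) (Fin d) ℤ) (b : Fin m → ℤ) (u : Fin d → ℤ) : Prop :=
  (∀ i, (-1 : ℤ) ≤ u i) ∧ A.mulVec u = b

/-- One edge of the fiber graph with move set `M` and vertex predicate `P`:
both endpoints satisfy `P` and they differ by an element of `±M`. -/
def moveStep {d : ℕ} (M : Finset (Fin d → ℤ)) (P : (Fin d → ℤ) → Prop)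
    (u v : Fin d → ℤ) : Prop :=
  P u ∧ P v ∧ (u - v ∈ M ∨ v - u ∈ M)

/-- The fiber graph with vertex set `{u | P u}` and moves `M` is connected. -/
def connectsOn {d : ℕ} (M : Finset (Fin d → ℤ)) (P : (Fin d → ℤ) → Prop) : Prop :=
  ∀ u v, P u → P v → Relation.ReflTransGen (moveStep M P) u v

/-- The positive part `v₊` of an integer vector. -/
def vecPosPart {d : ℕ} (v : Fin d → ℤ) : Fin d → ℤ := fun i => max (v i) 0

/-- The negative part `v₋` of an integer vector, so that `v = v₊ - v₋`. -/
def vecNegPart {d : ℕ} (v : Fin d → ℤ) : Fin d → ℤ := fun i => max (-v i) 0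

instance moveStep.instSymm {d : ℕ} (M : Finset (Fin d → ℤ)) (P : (Fin d → ℤ) → Prop) :
    Std.Symm (moveStep M P) :=
  ⟨fun _ _ h => ⟨h.2.1, h.1, h.2.2.symm⟩⟩

section Translation

variable {m d : ℕ} {A : Matrix (Fin m) (Fin d) ℤ} {M : Finset (Fin d → ℤ)}
  {P : (Fin d → ℤ) → Prop} {b : Fin m → ℤ} {t p q : Fin d → ℤ}

lemma mulVec_eq_of_moveStep (hM : ∀ x ∈ M, A.mulVec x = 0) (h : moveStep M P p q) :
    A.mulVec p = A.mulVec q := by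
  rw [← sub_eq_zero, ← Matrix.mulVec_sub]
  rcases h.2.2 with h | h
  · exact hM _ h
  · rw [← neg_sub, Matrix.mulVec_neg, hM _ h, neg_zero]

lemma mulVec_eq_of_reflTransGen_moveStep (hM : ∀ x ∈ M, A.mulVec x = 0)
    (h : Relation.ReflTransGen (moveStep M P) p q) : A.mulVec p = A.mulVec q := by
  induction h with
  | refl => rfl
  | tail _ hstep ih => exact ih.trans (mulVec_eq_of_moveStep hM hstep)

lemma moveStep_inExtFiber_add_left (ht : 0 ≤ t)
    (h : moveStep M (fun u => ∀ i, (-1 : ℤ) ≤ u i) p q)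
    (hp : A.mulVec (t + p) = b) (hq : A.mulVec (t + q) = b) :
    moveStep M (inExtFiber A b) (t + p) (t + q) := by
  refine ⟨⟨fun i => le_add_of_nonneg_of_le (ht i) (h.1 i), hp⟩,
    ⟨fun i => le_add_of_nonneg_of_le (ht i) (h.2.1 i), hq⟩, ?_⟩
  simpa only [add_sub_add_left_eq_sub] using h.2.2

lemma reflTransGen_moveStep_inExtFiber_add_left (hM : ∀ x ∈ M, A.mulVec x = 0) (ht : 0 ≤ t)
    (h : Relation.ReflTransGen (moveStep M (fun u => ∀ i, (-1 : ℤ) ≤ u i)) p q)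
    (hp : A.mulVec (t + p) = b) :
    Relation.ReflTransGen (moveStep M (inExtFiber A b)) (t + p) (t + q) := by
  induction h with
  | refl => rfl
  | @tail r s hpr hrs ih =>
    have hr : A.mulVec (t + r) = b := by
      rw [Matrix.mulVec_add, ← mulVec_eq_of_reflTransGen_moveStep hM hpr, ← Matrix.mulVec_add, hp]
    have hs : A.mulVec (t + s) = b := by
      rw [Matrix.mulVec_add, ← mulVec_eq_of_moveStep hM hrs, ← Matrix.mulVec_add, hr]
    exact ih.tail (moveStep_inExtFiber_add_left ht hrs hr hs)

end Translation

lemma inf_add_vecPosPart_sub {d : ℕ} (p q : Fin d → ℤ) : p ⊓ q + vecPosPart (p - q) = p := by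
  funext i
  simp only [Pi.add_apply, Pi.inf_apply, Pi.sub_apply, vecPosPart]
  omega

lemma inf_add_vecNegPart_sub {d : ℕ} (p q : Fin d → ℤ) : p ⊓ q + vecNegPart (p - q) = q := by
  funext i
  simp only [Pi.add_apply, Pi.inf_apply, Pi.sub_apply, vecNegPart]
  omega

lemma reflTransGen_moveStep_inExtFiber_of_sub {m d : ℕ} {A : Matrix (Fin m) (Fin d) ℤ}
    {M : Finset (Fin d → ℤ)} (hM : ∀ x ∈ M, A.mulVec x = 0) {b : Fin m → ℤ}
    {p q : Fin d → ℤ} (hp : inFiber A b p) (hq : inFiber A b q)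
    (hpq : Relation.ReflTransGen (moveStep M (fun u => ∀ i, (-1 : ℤ) ≤ u i))
      (vecPosPart (p - q)) (vecNegPart (p - q))) :
    Relation.ReflTransGen (moveStep M (inExtFiber A b)) p q := by
  have ht : 0 ≤ p ⊓ q := le_inf (fun i => hp.1 i) (fun i => hq.1 i)
  have hstart : A.mulVec (p ⊓ q + vecPosPart (p - q)) = b := by
    rw [inf_add_vecPosPart_sub]; exact hp.2
  simpa only [inf_add_vecPosPart_sub, inf_add_vecNegPart_sub] using
    reflTransGen_moveStep_inExtFiber_add_left hM ht hpq hstart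

theorem extConnect_of_markovBasis_parts_connected_general {m d : ℕ}
    (A : Matrix (Fin m) (Fin d) ℤ)
    (M' : Finset (Fin d → ℤ))
    (hMarkov : ∀ c : Fin m → ℤ, connectsOn M' (inFiber A c))
    (M : Finset (Fin d → ℤ)) (hM : ∀ x ∈ M, A.mulVec x = 0)
    (hparts : ∀ x ∈ M',
      Relation.ReflTransGen (moveStep M (fun u => ∀ i, (-1 : ℤ) ≤ u i))
        (vecPosPart x) (vecNegPart x))
    (b : Fin m → ℤ) :
    ∀ u v, inFiber A b u → inFiber A b v →
      Relation.ReflTransGen (moveStep M (inExtFiber A b)) u v := by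
  intro u v hu hv
  refine Relation.reflTransGen_closed (fun p q hpq => ?_) u v (hMarkov b u v hu hv)
  obtain ⟨hp, hq, hmem | hmem⟩ := hpq
  · exact reflTransGen_moveStep_inExtFiber_of_sub hM hp hq (hparts _ hmem)
  · exact symm (reflTransGen_moveStep_inExtFiber_of_sub hM hq hp (hparts _ hmem))

/-- Let `A` be a nonnegative integer matrix, `M'` a Markov basis for `A`, and
`M ⊆ ker A ∩ ℤ^d` a finite set of moves.  If for every `m' ∈ M'` the positive
part `m'₊` can be taken to the negative part `m'₋` by a sequence of moves from
`±M` whose intermediate vectors all have entries `≥ -1`, then for every `b`,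
any two tables of `F_{A,b}` are joined by a sequence of moves from `±M` whose
intermediate vectors `u` all satisfy `A u = b` and `u ≥ -1` componentwise. -/
theorem extConnect_of_markovBasis_parts_connected {m d : ℕ}
    (A : Matrix (Fin m) (Fin d) ℤ) (hA : ∀ i j, 0 ≤ A i j)
    (M' : Finset (Fin d → ℤ)) (hM' : ∀ x ∈ M', A.mulVec x = 0)
    (hMarkov : ∀ c : Fin m → ℤ, connectsOn M' (inFiber A c))
    (M : Finset (Fin d → ℤ)) (hM : ∀ x ∈ M, A.mulVec x = 0)
    (hparts : ∀ x ∈ M',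
      Relation.ReflTransGen (moveStep M (fun u => ∀ i, (-1 : ℤ) ≤ u i))
        (vecPosPart x) (vecNegPart x))
    (b : Fin m → ℤ) :
    ∀ u v, inFiber A b u → inFiber A b v →
      Relation.ReflTransGen (moveStep M (inExtFiber A b)) u v :=
  extConnect_of_markovBasis_parts_connected_general A M' hMarkov M hM hparts b
end

section
/- Let b²₊ and b²₋ be the 3×4×6 nonnegative integer tables (indexed by slice i ∈ {1,2,3}, row j ∈ {1,2,3,4}, column k ∈ {1,…,6}) with nonzero entries: b²₊ has entries 1 at (1;1,1),(1;2,2),(1;3,3),(1;4,4),(2;1,6),(2;2,3),(2;3,6),(2;4,1),(2;4,5),(3;1,2),(3;2,5),(3;3,4) and entry 2 at (3;4,6); b²₋ has entries 1 at (1;1,2),(1;2,3),(1;3,4),(1;4,1),(2;1,1),(2;2,5),(2;3,3),(3;1,6),(3;2,2),(3;3,6),(3;4,4),(3;4,5) and entry 2 at (2;4,6). Then b²₋ = b²₊ + m(2,3;2,4;5,6) + m(2,3;3,4;4,6) + m(2,3;1,2;2,6) − m(1,2;3,4;1,4) − m(1,2;1,3;1,3) + m(1,2;1,2;2,3), where m(i,i';j,j';k,k')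 denotes the corresponding basic move, and applying these six signed basic moves to b²₊ in the listed order, every intermediate table has all entries ≥ −1. In particular, b²₊ and b²₋ are connected by basic moves if cell counts X_{ijk} ≥ −1 are allowed. -/
/-- The three two-way margins of an `I × J × K` integer table:
`((Σ_i u_{ijk})_{jk}, (Σ_j u_{ijk})_{ik}, (Σ_k u_{ijk})_{ij})`.
This is the linear map given by the design matrix of the
no-three-way interaction model. -/
def margins {I J K : ℕ} (u : Fin I × Fin J × Fin K → ℤ) :
    (Fin J × Fin K → ℤ) × (Fin I × Fin K → ℤ) × (Fin I × Fin J → ℤ) :=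
  ⟨fun p => ∑ i, u (i, p.1, p.2),
   fun p => ∑ j, u (p.1, j, p.2),
   fun p => ∑ k, u (p.1, p.2, k)⟩

/-- The basic move `(i,i'; j,j'; k,k')` of a `2 × 2 × 2` minor:
`+1` at `(i,j,k), (i,j',k'), (i',j',k), (i',j,k')` and
`-1` at `(i,j',k), (i,j,k'), (i',j,k), (i',j',k')`, and `0` elsewhere. -/
def basicMove {I J K : ℕ} (i i' : Fin I) (j j' : Fin J) (k k' : Fin K) :
    Fin I × Fin J × Fin K → ℤ :=
  fun p =>
    (if p = (i, j, k) then 1 else 0) + (if p = (i, j', k') then 1 else 0) +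
      (if p = (i', j', k) then 1 else 0) + (if p = (i', j, k') then 1 else 0) -
      (if p = (i, j', k) then 1 else 0) - (if p = (i, j, k') then 1 else 0) -
      (if p = (i', j, k) then 1 else 0) - (if p = (i', j', k') then 1 else 0)

/-- The set of all basic moves of `2 × 2 × 2` minors of an `I × J × K` table. -/
def basicMoves (I J K : ℕ) : Set (Fin I × Fin J × Fin K → ℤ) :=
  {x | ∃ i i' j j' k k', i ≠ i' ∧ j ≠ j' ∧ k ≠ k' ∧ x = basicMove i i' j j' k k'}

/-- One edge of the fiber graph on tables with move set `M` and vertex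
predicate `P`: both endpoints satisfy `P` and they differ by an element of `±M`. -/
def tblStep {I J K : ℕ} (M : Set (Fin I × Fin J × Fin K → ℤ))
    (P : (Fin I × Fin J × Fin K → ℤ) → Prop)
    (u v : Fin I × Fin J × Fin K → ℤ) : Prop :=
  P u ∧ P v ∧ (u - v ∈ M ∨ v - u ∈ M)

/-- The fiber graph on `{u | P u}` with moves `M` is connected. -/
def tblConnectsOn {I J K : ℕ} (M : Set (Fin I × Fin J × Fin K → ℤ))
    (P : (Fin I × Fin J × Fin K → ℤ) → Prop) : Prop :=
  ∀ u v, P u → P v → Relation.ReflTransGen (tblStep M P) u v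

/-- The positive part `b²₊` of the indispensable move `b²` for `3 × 4 × 6`
tables under the no-three-way interaction model. -/
def b2plus : Fin 3 × Fin 4 × Fin 6 → ℤ :=
  fun p =>
    (![![![1, 0, 0, 0, 0, 0], ![0, 1, 0, 0, 0, 0], ![0, 0, 1, 0, 0, 0], ![0, 0, 0, 1, 0, 0]],
       ![![0, 0, 0, 0, 0, 1], ![0, 0, 1, 0, 0, 0], ![0, 0, 0, 0, 0, 1], ![1, 0, 0, 0, 1, 0]],
       ![![0, 1, 0, 0, 0, 0], ![0, 0, 0, 0, 1, 0], ![0, 0, 0, 1, 0, 0], ![0, 0, 0, 0, 0, 2]]] :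
      Fin 3 → Fin 4 → Fin 6 → ℤ) p.1 p.2.1 p.2.2

/-- The negative part `b²₋` of the indispensable move `b²` for `3 × 4 × 6`
tables under the no-three-way interaction model. -/
def b2minus : Fin 3 × Fin 4 × Fin 6 → ℤ :=
  fun p =>
    (![![![0, 1, 0, 0, 0, 0], ![0, 0, 1, 0, 0, 0], ![0, 0, 0, 1, 0, 0], ![1, 0, 0, 0, 0, 0]],
       ![![1, 0, 0, 0, 0, 0], ![0, 0, 0, 0, 1, 0], ![0, 0, 1, 0, 0, 0], ![0, 0, 0, 0, 0, 2]],
       ![![0, 0, 0, 0, 0, 1], ![0, 1, 0, 0, 0, 0], ![0, 0, 0, 0, 0, 1], ![0, 0, 0, 1, 1, 0]]] :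
      Fin 3 → Fin 4 → Fin 6 → ℤ) p.1 p.2.1 p.2.2

/-- First intermediate table: `b²₊ + m(2,3;2,4;5,6)` (1-based indices). -/
def b2s1 : Fin 3 × Fin 4 × Fin 6 → ℤ := b2plus + basicMove 1 2 1 3 4 5
/-- Second intermediate table: add `m(2,3;3,4;4,6)`. -/
def b2s2 : Fin 3 × Fin 4 × Fin 6 → ℤ := b2s1 + basicMove 1 2 2 3 3 5
/-- Third intermediate table: add `m(2,3;1,2;2,6)`. -/
def b2s3 : Fin 3 × Fin 4 × Fin 6 → ℤ := b2s2 + basicMove 1 2 0 1 1 5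
/-- Fourth intermediate table: subtract `m(1,2;3,4;1,4)`. -/
def b2s4 : Fin 3 × Fin 4 × Fin 6 → ℤ := b2s3 - basicMove 0 1 2 3 0 3
/-- Fifth intermediate table: subtract `m(1,2;1,3;1,3)`. -/
def b2s5 : Fin 3 × Fin 4 × Fin 6 → ℤ := b2s4 - basicMove 0 1 0 2 0 2

/-!
Basic moves lie in the kernel of the margin map, so adding or subtracting them never leaves the
fiber of `b²₊`; what remains is to check, cell by cell, that the six moves sum to `b²₋ - b²₊` and
that no entry of an intermediate table drops below `-1`.
-/

section FiberGraph

variable {I J K : ℕ}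

theorem margins_add (u v : Fin I × Fin J × Fin K → ℤ) :
    margins (u + v) = margins u + margins v := by
  simp only [margins, Pi.add_apply, Finset.sum_add_distrib]; rfl

theorem margins_sub (u v : Fin I × Fin J × Fin K → ℤ) :
    margins (u - v) = margins u - margins v := by
  simp only [margins, Pi.sub_apply, Finset.sum_sub_distrib]; rfl

theorem margins_basicMove (i i' : Fin I) (j j' : Fin J) (k k' : Fin K) :
    margins (basicMove i i' j j' k k') = 0 := by
  simp only [margins, basicMove, Finset.sum_add_distrib, Finset.sum_sub_distrib, Prod.mk.injEq]
  refine Prod.ext (funext fun p => ?_) (Prod.ext (funext fun p => ?_) (funext fun p => ?_)) <;>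
    simp [ite_and, Finset.sum_ite_irrel] <;> split_ifs <;> simp

theorem basicMove_mem_basicMoves {i i' : Fin I} {j j' : Fin J} {k k' : Fin K}
    (hi : i ≠ i') (hj : j ≠ j') (hk : k ≠ k') : basicMove i i' j j' k k' ∈ basicMoves I J K :=
  ⟨i, i', j, j', k, k', hi, hj, hk, rfl⟩

def InFiberAbove (c : ℤ) (t : (Fin J × Fin K → ℤ) × (Fin I × Fin K → ℤ) × (Fin I × Fin J → ℤ))
    (w : Fin I × Fin J × Fin K → ℤ) : Prop :=
  (∀ p, c ≤ w p) ∧ margins w = t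

variable {c : ℤ} {t : (Fin J × Fin K → ℤ) × (Fin I × Fin K → ℤ) × (Fin I × Fin J → ℤ)}
  {u : Fin I × Fin J × Fin K → ℤ} {i i' : Fin I} {j j' : Fin J} {k k' : Fin K}

theorem tblStep_add_basicMove (hi : i ≠ i') (hj : j ≠ j') (hk : k ≠ k')
    (hu : InFiberAbove c t u) (hv : ∀ p, c ≤ (u + basicMove i i' j j' k k') p) :
    tblStep (basicMoves I J K) (InFiberAbove c t) u (u + basicMove i i' j j' k k') := by
  refine ⟨hu, ⟨hv, ?_⟩, Or.inr ?_⟩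
  · rw [margins_add, margins_basicMove, add_zero, hu.2]
  · rw [add_sub_cancel_left]; exact basicMove_mem_basicMoves hi hj hk

theorem tblStep_sub_basicMove (hi : i ≠ i') (hj : j ≠ j') (hk : k ≠ k')
    (hu : InFiberAbove c t u) (hv : ∀ p, c ≤ (u - basicMove i i' j j' k k') p) :
    tblStep (basicMoves I J K) (InFiberAbove c t) u (u - basicMove i i' j j' k k') := by
  refine ⟨hu, ⟨hv, ?_⟩, Or.inl ?_⟩
  · rw [margins_sub, margins_basicMove, sub_zero, hu.2]
  · rw [sub_sub_cancel]; exact basicMove_mem_basicMoves hi hj hk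

end FiberGraph

theorem b2plus_nonneg (p : Fin 3 × Fin 4 × Fin 6) : 0 ≤ b2plus p := by
  revert p; decide

theorem b2minus_nonneg (p : Fin 3 × Fin 4 × Fin 6) : 0 ≤ b2minus p := by
  revert p; decide

theorem b2minus_eq_b2s5_add : b2minus = b2s5 + basicMove 0 1 0 1 1 2 := by
  funext ⟨i, j, k⟩; fin_cases i <;> fin_cases j <;> fin_cases k <;> rfl

theorem neg_one_le_b2s : ∀ s ∈ [b2s1, b2s2, b2s3, b2s4, b2s5], ∀ p, (-1 : ℤ) ≤ s p := by
  simp only [List.forall_mem_cons]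
  refine ⟨?_, ?_, ?_, ?_, ?_, by simp⟩ <;> decide

/-- `b²₋ = b²₊ + m(2,3;2,4;5,6) + m(2,3;3,4;4,6) + m(2,3;1,2;2,6)
- m(1,2;3,4;1,4) - m(1,2;1,3;1,3) + m(1,2;1,2;2,3)` (1-based indices; the
`basicMove` arguments below are the 0-based versions), applying these six
signed basic moves in the listed order keeps all entries `≥ -1` at every
intermediate step, and hence `b²₊` and `b²₋` are connected by basic moves
once cell counts are allowed to be `-1`. -/
theorem b2minus_reachable_from_b2plus :
    b2minus = b2plus + basicMove 1 2 1 3 4 5 + basicMove 1 2 2 3 3 5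
        + basicMove 1 2 0 1 1 5 - basicMove 0 1 2 3 0 3
        - basicMove 0 1 0 2 0 2 + basicMove 0 1 0 1 1 2 ∧
    (∀ s ∈ [b2s1, b2s2, b2s3, b2s4, b2s5], ∀ p, (-1 : ℤ) ≤ s p) ∧
    Relation.ReflTransGen
      (tblStep (basicMoves 3 4 6)
        (fun w => (∀ p, (-1 : ℤ) ≤ w p) ∧ margins w = margins b2plus))
      b2plus b2minus := by
  have hlow := neg_one_le_b2s
  simp only [List.forall_mem_cons] at hlow
  obtain ⟨h1, h2, h3, h4, h5, -⟩ := hlow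
  refine ⟨b2minus_eq_b2s5_add, neg_one_le_b2s, ?_⟩
  change Relation.ReflTransGen (tblStep _ (InFiberAbove (-1) (margins b2plus))) _ _
  have h0 : InFiberAbove (-1) (margins b2plus) b2plus :=
    ⟨fun p => (b2plus_nonneg p).trans' (by norm_num), rfl⟩
  have h6 : ∀ p, (-1 : ℤ) ≤ b2minus p := fun p => (b2minus_nonneg p).trans' (by norm_num)
  rw [b2minus_eq_b2s5_add] at h6 ⊢
  have e1 := tblStep_add_basicMove (by decide) (by decide) (by decide) h0 h1
  have e2 := tblStep_add_basicMove (by decide) (by decide) (by decide) e1.2.1 h2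
  have e3 := tblStep_add_basicMove (by decide) (by decide) (by decide) e2.2.1 h3
  have e4 := tblStep_sub_basicMove (by decide) (by decide) (by decide) e3.2.1 h4
  have e5 := tblStep_sub_basicMove (by decide) (by decide) (by decide) e4.2.1 h5
  have e6 := tblStep_add_basicMove (by decide) (by decide) (by decide) e5.2.1 h6
  exact .tail (.tail (.tail (.tail (.tail (.single e1) e2) e3) e4) e5) e6
end

section
/- Let T be the 3×3×3 nonnegative integer table defined by T_{ijk} = 3 if k − j ≡ i − 1 (mod 3) and T_{ijk} = 0 otherwise (so each of the three slices of T is 3 times a permutation matrix, the three permutation patterns forming a Latin square). Then: (1) for every basic move m of a 2×2×2 minor, the table T + m has a negative entry, so T is an isolated vertex of the fiber graph G(F_{A,b}, M_B), where A is the no-three-way interaction design matrix, b is the vector of two-way margins of T, and M_B is the set of all basic moves; and (2) F_{A,b} contains a table different from T. Consequently, the set of basic moves does not connect all tables in F_{A,b}. -/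
/-- The `3 × 3 × 3` table with `T_{ijk} = 3` when `k - j ≡ i - 1 (mod 3)`
(in 1-based indexing; equivalently `k - j ≡ i (mod 3)` for the 0-based
indices used here) and `T_{ijk} = 0` otherwise.  Each slice is `3` times a
permutation matrix and the three permutation patterns form a Latin square. -/
def latinTable : Fin 3 × Fin 3 × Fin 3 → ℤ :=
  fun p =>
    if ((p.2.2.val : ZMod 3) - (p.2.1.val : ZMod 3) = (p.1.val : ZMod 3)) then 3 else 0

/-!
A basic move can be added to a nonnegative table only if the table is positive at the four
cells where the move is `-1`. For `T` these cells would satisfy `k - j' = k' - j = i` and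
`k - j = k' - j' = i'` modulo 3, forcing `2 (j - j') = 0`, i.e. `j = j'`; so `T` is an isolated
vertex. Shifting the Latin square cyclically gives another table all of whose two-way margins,
like those of `T`, equal 3.
-/

section FiberGraph

variable {I J K : ℕ}

theorem neg_basicMove (i i' : Fin I) (j j' : Fin J) (k k' : Fin K) :
    -basicMove i i' j j' k k' = basicMove i' i j j' k k' := by
  funext p
  simp only [Pi.neg_apply, basicMove]
  ring

theorem neg_mem_basicMoves {x : Fin I × Fin J × Fin K → ℤ} (hx : x ∈ basicMoves I J K) :
    -x ∈ basicMoves I J K := by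
  obtain ⟨i, i', j, j', k, k', hi, hj, hk, rfl⟩ := hx
  exact ⟨i', i, j, j', k, k', hi.symm, hj, hk, neg_basicMove i i' j j' k k'⟩

theorem eq_of_reflTransGen_tblStep_of_isolated {M : Set (Fin I × Fin J × Fin K → ℤ)}
    {P : (Fin I × Fin J × Fin K → ℤ) → Prop} {u v : Fin I × Fin J × Fin K → ℤ}
    (hM : ∀ x ∈ M, -x ∈ M) (hu : ∀ x ∈ M, ¬ P (u + x))
    (h : Relation.ReflTransGen (tblStep M P) u v) : v = u := by
  rcases h.cases_head with rfl | ⟨w, ⟨-, hw, hmove⟩, -⟩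
  · rfl
  · have hwu : w - u ∈ M := hmove.elim (fun h => by simpa using hM _ h) id
    exact absurd (by simpa using hw) (hu _ hwu)

theorem not_tblConnectsOn_of_isolated {M : Set (Fin I × Fin J × Fin K → ℤ)}
    {P : (Fin I × Fin J × Fin K → ℤ) → Prop} {u v : Fin I × Fin J × Fin K → ℤ}
    (hM : ∀ x ∈ M, -x ∈ M) (hu : ∀ x ∈ M, ¬ P (u + x))
    (hPu : P u) (hPv : P v) (hvu : v ≠ u) : ¬ tblConnectsOn M P :=
  fun hconn => hvu (eq_of_reflTransGen_tblStep_of_isolated hM hu (hconn u v hPu hPv))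

end FiberGraph

theorem latinTable_add_basicMove_neg :
    ∀ i i' j j' k k' : Fin 3, i ≠ i' → j ≠ j' → k ≠ k' →
      ∃ p, (latinTable + basicMove i i' j j' k k') p < 0 := by
  decide

theorem latinTable_add_mem_basicMoves_neg {x : Fin 3 × Fin 3 × Fin 3 → ℤ}
    (hx : x ∈ basicMoves 3 3 3) : ∃ p, (latinTable + x) p < 0 := by
  obtain ⟨i, i', j, j', k, k', hi, hj, hk, rfl⟩ := hx
  exact latinTable_add_basicMove_neg i i' j j' k k' hi hj hk

def shiftedLatinTable : Fin 3 × Fin 3 × Fin 3 → ℤ :=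
  fun p =>
    if ((p.2.2.val : ZMod 3) - (p.2.1.val : ZMod 3) = (p.1.val : ZMod 3) + 1) then 3 else 0

theorem latinTable_nonneg : ∀ p, 0 ≤ latinTable p := by
  decide

theorem shiftedLatinTable_nonneg : ∀ p, 0 ≤ shiftedLatinTable p := by
  decide

theorem margins_shiftedLatinTable : margins shiftedLatinTable = margins latinTable := by
  decide

theorem shiftedLatinTable_ne_latinTable : shiftedLatinTable ≠ latinTable := by
  decide

/-- For the table `latinTable`: (1) adding any basic move produces a negative
entry, so `latinTable` is an isolated vertex of the fiber graph with basic
moves; (2) its fiber contains another table.  Consequently the set of basic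
moves does not connect all tables in the fiber of `latinTable`. -/
theorem latinTable_isolated_and_fiber_not_connected :
    (∀ x ∈ basicMoves 3 3 3, ∃ p, (latinTable + x) p < 0) ∧
    (∃ u : Fin 3 × Fin 3 × Fin 3 → ℤ,
      (∀ p, 0 ≤ u p) ∧ margins u = margins latinTable ∧ u ≠ latinTable) ∧
    ¬ tblConnectsOn (basicMoves 3 3 3)
        (fun u => (∀ p, 0 ≤ u p) ∧ margins u = margins latinTable) := by
  refine ⟨fun x => latinTable_add_mem_basicMoves_neg,
    ⟨shiftedLatinTable, shiftedLatinTable_nonneg, margins_shiftedLatinTable,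
      shiftedLatinTable_ne_latinTable⟩, ?_⟩
  refine not_tblConnectsOn_of_isolated (fun x => neg_mem_basicMoves) ?_
    ⟨latinTable_nonneg, rfl⟩ ⟨shiftedLatinTable_nonneg, margins_shiftedLatinTable⟩
    shiftedLatinTable_ne_latinTable
  rintro x hx ⟨hnonneg, -⟩
  obtain ⟨p, hp⟩ := latinTable_add_mem_basicMoves_neg hx
  exact (hnonneg p).not_gt hp
end

section
/- Let T be the 3×3×3 nonnegative integer table defined by T_{ijk} = 3 if k − j ≡ i − 1 (mod 3) and T_{ijk} = 0 otherwise, and let b be the vector of two-way margins of T. Then there exists a table u ∈ F_{A,b} with u ≠ T and a finite sequence of basic moves leading from T to u in which every intermediate table has all entries ≥ −1; that is, allowing cell counts to be −1, T is connected by basic moves to other tables in its fiber. -/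
/-!
Starting from `latinTable`, the basic move on the minor `{0,1} × {0,1} × {0,1}` stays in the
fiber but creates the entry `-1` at `(1,1,0)`. The basic move on the minor
`{0,1} × {1,2} × {0,2}` then refills that cell, and the result is a nonnegative table of the fiber
other than `latinTable`. Basic moves do not change the two-way margins, so only the entry bounds
need checking along the way.
-/

section Margins

variable {I J K : ℕ}

theorem margins_add_basicMove (u : Fin I × Fin J × Fin K → ℤ) (i i' : Fin I) (j j' : Fin J)
    (k k' : Fin K) : margins (u + basicMove i i' j j' k k') = margins u := by
  rw [margins_add, margins_basicMove, add_zero]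

end Margins

theorem tblStep_add {I J K : ℕ} {M : Set (Fin I × Fin J × Fin K → ℤ)}
    {P : (Fin I × Fin J × Fin K → ℤ) → Prop} {u m : Fin I × Fin J × Fin K → ℤ}
    (hu : P u) (hum : P (u + m)) (hm : m ∈ M) : tblStep M P u (u + m) :=
  ⟨hu, hum, Or.inr (by rwa [add_sub_cancel_left])⟩

def latinTableStep : Fin 3 × Fin 3 × Fin 3 → ℤ :=
  latinTable + basicMove 1 0 0 1 0 1

def latinTableNeighbor : Fin 3 × Fin 3 × Fin 3 → ℤ :=
  latinTableStep + basicMove 1 0 1 2 0 2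

theorem latinTableNeighbor_nonneg : ∀ p, 0 ≤ latinTableNeighbor p := by decide

theorem latinTableNeighbor_ne : latinTableNeighbor ≠ latinTable := by decide

theorem latinTableStep_ge_neg_one : ∀ p, -1 ≤ latinTableStep p := by decide

/-- Allowing cell counts to be `-1`, the table `latinTable` is connected by
basic moves to some other table of its fiber: there is a table `u ≠ latinTable`
with the same two-way margins, nonnegative entries, and a finite sequence of
basic moves from `latinTable` to `u` whose intermediate tables all have
entries `≥ -1`. -/
theorem latinTable_extConnected_to_another_table :
    ∃ u : Fin 3 × Fin 3 × Fin 3 → ℤ,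
      (∀ p, 0 ≤ u p) ∧ margins u = margins latinTable ∧ u ≠ latinTable ∧
      Relation.ReflTransGen
        (tblStep (basicMoves 3 3 3)
          (fun w => (∀ p, (-1 : ℤ) ≤ w p) ∧ margins w = margins latinTable))
        latinTable u := by
  have hStep : margins latinTableStep = margins latinTable := margins_add_basicMove _ _ _ _ _ _ _
  have hNeighbor : margins latinTableNeighbor = margins latinTable := by
    rw [latinTableNeighbor, margins_add_basicMove, hStep]
  have hStart : (∀ p, -1 ≤ latinTable p) ∧ margins latinTable = margins latinTable :=
    ⟨by decide, rfl⟩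
  have hMid := And.intro latinTableStep_ge_neg_one hStep
  have hEnd : (∀ p, -1 ≤ latinTableNeighbor p) ∧ _ :=
    ⟨fun p => by linarith [latinTableNeighbor_nonneg p], hNeighbor⟩
  refine ⟨latinTableNeighbor, latinTableNeighbor_nonneg, hNeighbor, latinTableNeighbor_ne, ?_⟩
  exact .head (tblStep_add hStart hMid ⟨1, 0, 0, 1, 0, 1, by decide, by decide, by decide, rfl⟩)
    (.single (tblStep_add hMid hEnd ⟨1, 0, 1, 2, 0, 2, by decide, by decide, by decide, rfl⟩))
end
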